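/- Let k and ℓ be odd positive integers with ℓ > k. For all primes p < p′ with p·p′ < p³, one has a_{k,ℓ}(p·p′) < 0. -/
import Mathlib

/-- `σ_s(n) = ∑_{d ∣ n} d^s`, as an integer. -/
def sigmaZ (s n : ℕ) : ℤ := ∑ d ∈ n.divisors, (d : ℤ) ^ s

/-- `a_{k,ℓ}(n) = (n^{3ℓ}+n^{2ℓ}+n^ℓ+1)·σ_{3k}(n) − (n^{3k}+n^{2k}+n^k+1)·σ_{3ℓ}(n)`. -/
def aFun (k l n : ℕ) : ℤ :=
  ((n : ℤ) ^ (3 * l) + (n : ℤ) ^ (2 * l) + (n : ℤ) ^ l + 1) * sigmaZ (3 * k) n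
    - ((n : ℤ) ^ (3 * k) + (n : ℤ) ^ (2 * k) + (n : ℤ) ^ k + 1) * sigmaZ (3 * l) n

lemma key' (X Y s t : ℤ) (hX : 1 ≤ X) (hXY : 3*X ≤ Y) (hs : 0 ≤ s) (ht : 0 ≤ t)
    (hF1 : s + 1 ≤ X^2) (hF2 : X^3 ≤ (X^2-s)*Y) :
    (Y^3+Y^2+Y+1)*(X^3+s+1) < (X^3+X^2+X+1)*(Y^3+t+1) := by
  have hY : 3 ≤ Y := by linarith
  have h1 : X^3*Y^2 ≤ (X^2-s)*Y^3 := by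
    have := mul_le_mul_of_nonneg_right hF2 (sq_nonneg Y)
    nlinarith [this]
  have h2 : s*(Y^2+Y+1) ≤ (X^2-1)*(Y^2+Y+1) := by
    apply mul_le_mul_of_nonneg_right (by linarith) (by nlinarith)
  have h3 : 3*(X^2*Y^2) ≤ X*Y^3 := by
    nlinarith [mul_nonneg (mul_nonneg (by linarith : (0:ℤ) ≤ X) (sq_nonneg Y)) (by linarith : (0:ℤ) ≤ Y - 3*X)]
  have h4 : X^3*Y ≤ X^2*Y^2 := by
    nlinarith [mul_nonneg (mul_nonneg (sq_nonneg X) (by linarith : (0:ℤ) ≤ Y)) (by linarith : (0:ℤ) ≤ Y - X)]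
  have h5 : X^2*Y ≤ X^2*Y^2 := by
    nlinarith [mul_nonneg (mul_nonneg (sq_nonneg X) (by linarith : (0:ℤ) ≤ Y)) (by linarith : (0:ℤ) ≤ Y - 1)]
  have ht' : 0 ≤ t*(X^3+X^2+X+1) := mul_nonneg ht (by nlinarith)
  nlinarith [h1,h2,h3,h4,h5,ht']

lemma fact1 (a b : ℤ) (ha : 2 ≤ a) (hab : a+1 ≤ b) (hba : b+1 ≤ a^2) :
    a^3 + b^3 + 1 ≤ a^2*b^2 := by
  nlinarith [mul_nonneg (mul_nonneg (by linarith : (0:ℤ) ≤ b - a - 1) (by linarith : (0:ℤ) ≤ a^2 - b - 1)) (by linarith : (0:ℤ) ≤ b), sq_nonneg (a*b), sq_nonneg (a-b), sq_nonneg b, sq_nonneg a]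

lemma factP (p q : ℤ) (hp : 2 ≤ p) (hpq : p+1 ≤ q) (hq : q+1 ≤ p^2) :
    p^9 + q^9 + p^4*q^4 ≤ p^6*q^6 := by
  have hq0 : (0:ℤ) ≤ q := by linarith
  have hp0 : (0:ℤ) ≤ p := by linarith
  have h3 : q^3 ≤ (p^2-1)^3 := pow_le_pow_left₀ hq0 (by linarith) 3
  have e1 : q^9 ≤ (p^6 - 3*p^4 + 3*p^2 - 1)*q^6 := by
    have := mul_le_mul_of_nonneg_right h3 (by positivity : (0:ℤ) ≤ q^6)
    nlinarith [this]
  have e2 : p^5 ≤ q^6 := by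
    calc p^5 ≤ p^6 := by nlinarith [pow_pos (by linarith : (0:ℤ) < p) 5]
    _ ≤ q^6 := pow_le_pow_left₀ hp0 (by linarith) 6
  have e3 : q^4 ≤ q^6 := by
    nlinarith [pow_pos (by linarith : (0:ℤ) < q) 4, pow_le_pow_right₀ (by linarith : (1:ℤ) ≤ q) (by norm_num : 4 ≤ 6)]
  nlinarith [e1, mul_le_mul_of_nonneg_left e2 (by positivity : (0:ℤ) ≤ p^4),
    mul_le_mul_of_nonneg_left e3 (by positivity : (0:ℤ) ≤ p^4),
    mul_nonneg (by nlinarith [sq_nonneg p, sq_nonneg (p^2-3)] : (0:ℤ) ≤ p^4-3*p^2+1) (by positivity : (0:ℤ) ≤ q^6)]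

lemma sigmaZ_prime (s : ℕ) {p : ℕ} (hp : p.Prime) : sigmaZ s p = 1 + (p:ℤ)^s := by
  rw [sigmaZ, hp.divisors]
  rw [Finset.sum_pair (by exact fun h => hp.one_lt.ne h : (1:ℕ) ≠ p)]
  push_cast; ring

lemma sigmaZ_mul' {m n : ℕ} (s : ℕ) (h : m.Coprime n) :
    sigmaZ s (m*n) = sigmaZ s m * sigmaZ s n := by
  have hσ : (ArithmeticFunction.sigma s) (m*n) =
      (ArithmeticFunction.sigma s) m * (ArithmeticFunction.sigma s) n :=
    ArithmeticFunction.isMultiplicative_sigma.map_mul_of_coprime h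
  have e : ∀ j : ℕ, sigmaZ s j = ((ArithmeticFunction.sigma s j : ℕ) : ℤ) := by
    intro j
    rw [ArithmeticFunction.sigma_apply, sigmaZ]
    push_cast; rfl
  rw [e, e, e, hσ]; push_cast; ring

set_option maxHeartbeats 1000000 in
theorem aFun_semiprime_neg (k l : ℕ) (hk : Odd k) (hl : Odd l) (hkpos : 0 < k)
    (hkl : k < l) (p p' : ℕ) (hp : p.Prime) (hp' : p'.Prime) (hpp' : p < p')
    (hlt : p * p' < p ^ 3) :
    aFun k l (p * p') < 0 := by
  have hp2 : 2 ≤ p := hp.two_le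
  have hqsq : p' + 1 ≤ p^2 := by
    have h1 : p * p' < p * p^2 := by
      calc p * p' < p^3 := hlt
      _ = p * p^2 := by ring
    have := Nat.lt_of_mul_lt_mul_left h1
    omega
  have hkl2 : k + 2 ≤ l := by
    obtain ⟨i, hi⟩ := hk; obtain ⟨j, hj⟩ := hl; omega
  have hpz : (2:ℤ) ≤ (p:ℤ) := by exact_mod_cast hp2
  have hqz : (p:ℤ) + 1 ≤ (p':ℤ) := by exact_mod_cast hpp'
  have hqsz : (p':ℤ) + 1 ≤ (p:ℤ)^2 := by exact_mod_cast hqsq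
  have hp0 : (0:ℤ) ≤ (p:ℤ) := by linarith
  have hq0 : (0:ℤ) ≤ (p':ℤ) := by linarith
  set a : ℤ := (p:ℤ)^k with ha
  set b : ℤ := (p':ℤ)^k with hb
  set c : ℤ := (p:ℤ)^l with hc
  set d : ℤ := (p':ℤ)^l with hd
  have ha2 : 2 ≤ a := le_trans hpz (le_self_pow₀ (by linarith) (by omega))
  have hab : a + 1 ≤ b := by
    have : a < b := by
      rw [ha, hb]
      exact pow_lt_pow_left₀ (by exact_mod_cast hpp') hp0 (by omega)
    linarith
  have hba : b + 1 ≤ a^2 := by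
    have h1 : b < ((p:ℤ)^2)^k := by
      rw [hb]
      exact pow_lt_pow_left₀ (by linarith) hq0 (by omega)
    have h2 : ((p:ℤ)^2)^k = a^2 := by rw [ha, ← pow_mul, ← pow_mul, mul_comm]
    linarith
  have hF1 : (a^3+b^3) + 1 ≤ (a*b)^2 := by
    have := fact1 a b ha2 hab hba
    nlinarith [this]
  have hs : (0:ℤ) ≤ a^3+b^3 := by positivity
  have ht : (0:ℤ) ≤ c^3+d^3 := by positivity
  have hX1 : (1:ℤ) ≤ a*b := by nlinarith
  have hNX : (a*b) = ((p:ℤ)*(p':ℤ))^k := by rw [ha, hb, mul_pow]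
  have hNY : (c*d) = ((p:ℤ)*(p':ℤ))^l := by rw [hc, hd, mul_pow]
  have hN6 : (6:ℤ) ≤ (p:ℤ)*(p':ℤ) := by nlinarith
  have hXY : 3*(a*b) ≤ c*d := by
    rw [hNX, hNY]
    have h1 : ((p:ℤ)*(p':ℤ))^(k+1) ≤ ((p:ℤ)*(p':ℤ))^l :=
      pow_le_pow_right₀ (by linarith) (by omega)
    have h3 : (0:ℤ) ≤ ((p:ℤ)*(p':ℤ))^k := by positivity
    have h6 : (6:ℤ)*((p:ℤ)*(p':ℤ))^k ≤ ((p:ℤ)*(p':ℤ))^(k+1) := by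
      calc (6:ℤ)*((p:ℤ)*(p':ℤ))^k ≤ ((p:ℤ)*(p':ℤ))*((p:ℤ)*(p':ℤ))^k :=
            mul_le_mul_of_nonneg_right hN6 h3
      _ = ((p:ℤ)*(p':ℤ))^(k+1) := by ring
    linarith [h1, h6, h3]
  have hYpos : (0:ℤ) ≤ c*d := by
    rw [hc, hd]; positivity
  have hW : (0:ℤ) ≤ (a*b)^2 - (a^3+b^3) := by linarith
  have hF2 : (a*b)^3 ≤ ((a*b)^2 - (a^3+b^3))*(c*d) := by
    have hk13 : k = 1 ∨ 3 ≤ k := by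
      rcases hk with ⟨i, hi⟩; omega
    rcases hk13 with hk1 | h3
    · -- k = 1
      have hXY3 : (a*b)^3 ≤ c*d := by
        rw [hNX, hNY, hk1]
        have e : (((p:ℤ)*(p':ℤ))^1)^3 = ((p:ℤ)*(p':ℤ))^3 := by ring
        rw [e]
        exact pow_le_pow_right₀ (by linarith) (by omega)
      nlinarith [mul_nonneg (by linarith : (0:ℤ) ≤ (a*b)^2 - (a^3+b^3) - 1) hYpos]
    · -- k ≥ 3
      obtain ⟨m, hm⟩ : ∃ m, k = m + 3 := ⟨k - 3, by omega⟩
      have R11 : b*(p:ℤ)^6 ≤ a^2*(p':ℤ)^3 := by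
        have h1 : (p':ℤ)^m ≤ ((p:ℤ)^2)^m := pow_le_pow_left₀ hq0 (by linarith) m
        calc b*(p:ℤ)^6 = (p':ℤ)^m * ((p':ℤ)^3*(p:ℤ)^6) := by rw [hb, hm]; ring
        _ ≤ ((p:ℤ)^2)^m * ((p':ℤ)^3*(p:ℤ)^6) :=
            mul_le_mul_of_nonneg_right h1 (by positivity)
        _ = a^2*(p':ℤ)^3 := by rw [ha, hm]; ring
      have R12 : a*(p':ℤ)^6 ≤ b^2*(p:ℤ)^3 := by
        have h1 : (p:ℤ)^m ≤ ((p':ℤ)^2)^m := pow_le_pow_left₀ hp0 (by nlinarith) m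
        calc a*(p':ℤ)^6 = (p:ℤ)^m * ((p:ℤ)^3*(p':ℤ)^6) := by rw [ha, hm]; ring
        _ ≤ ((p':ℤ)^2)^m * ((p:ℤ)^3*(p':ℤ)^6) :=
            mul_le_mul_of_nonneg_right h1 (by positivity)
        _ = b^2*(p:ℤ)^3 := by rw [hb, hm]; ring
      have P := factP (p:ℤ) (p':ℤ) hpz hqz hqsz
      have g1 : a^3*((p:ℤ)^6*(p':ℤ)^6) ≤ (a*b)^2*(p:ℤ)^9 := by
        have := mul_le_mul_of_nonneg_left R12 (show (0:ℤ) ≤ a^2*(p:ℤ)^6 by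
          rw [ha]; positivity)
        nlinarith [this]
      have g2 : b^3*((p:ℤ)^6*(p':ℤ)^6) ≤ (a*b)^2*(p':ℤ)^9 := by
        have := mul_le_mul_of_nonneg_left R11 (show (0:ℤ) ≤ b^2*(p':ℤ)^6 by
          rw [hb]; positivity)
        nlinarith [this]
      have g3 := mul_le_mul_of_nonneg_left P (show (0:ℤ) ≤ (a*b)^2 by positivity)
      have G : (a^3+b^3)*((p:ℤ)^6*(p':ℤ)^6) + (a*b)^2*((p:ℤ)^4*(p':ℤ)^4)
          ≤ (a*b)^2*((p:ℤ)^6*(p':ℤ)^6) := by nlinarith [g1, g2, g3]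
      have hY2 : (a*b)*((p:ℤ)^2*(p':ℤ)^2) ≤ c*d := by
        rw [hNX, hNY]
        calc ((p:ℤ)*(p':ℤ))^k * ((p:ℤ)^2*(p':ℤ)^2) = ((p:ℤ)*(p':ℤ))^(k+2) := by ring
        _ ≤ ((p:ℤ)*(p':ℤ))^l := pow_le_pow_right₀ (by linarith) (by omega)
      have hXnn : (0:ℤ) ≤ a*b := by linarith
      have c1 : (a*b)^3*((p:ℤ)^4*(p':ℤ)^4)
          ≤ (((a*b)^2 - (a^3+b^3))*((a*b)*((p:ℤ)^2*(p':ℤ)^2)))*((p:ℤ)^4*(p':ℤ)^4) := by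
        have := mul_le_mul_of_nonneg_left G hXnn
        nlinarith [this]
      have hppos : (0:ℤ) < (p:ℤ)^4*(p':ℤ)^4 := by
        have h4 : (0:ℤ) < (p:ℤ) := by linarith
        have h5 : (0:ℤ) < (p':ℤ) := by linarith
        positivity
      have c2 : (a*b)^3 ≤ ((a*b)^2 - (a^3+b^3))*((a*b)*((p:ℤ)^2*(p':ℤ)^2)) :=
        le_of_mul_le_mul_right c1 hppos
      calc (a*b)^3 ≤ ((a*b)^2 - (a^3+b^3))*((a*b)*((p:ℤ)^2*(p':ℤ)^2)) := c2
      _ ≤ ((a*b)^2 - (a^3+b^3))*(c*d) := mul_le_mul_of_nonneg_left hY2 hW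
  have T := key' (a*b) (c*d) (a^3+b^3) (c^3+d^3) hX1 hXY hs ht hF1 hF2
  have hcop : Nat.Coprime p p' := (Nat.coprime_primes hp hp').mpr (Nat.ne_of_lt hpp')
  unfold aFun
  rw [sigmaZ_mul' (3*k) hcop, sigmaZ_mul' (3*l) hcop, sigmaZ_prime (3*k) hp,
    sigmaZ_prime (3*k) hp', sigmaZ_prime (3*l) hp, sigmaZ_prime (3*l) hp']
  push_cast
  rw [ha, hb, hc, hd] at T
  have T3 := sub_neg.mpr T
  convert T3 using 1
  ring
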